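/- Let $0 < p < 1$ and for integer $M \ge 1$ define $g_p(\alpha \mid M) = 2^{1/M} \frac{\alpha^{\alpha}}{(\alpha-1)^{\alpha-1}} p^{\alpha-1}(1-p) - 1$ for $\alpha > 1$. Let $\alpha_{p,M}$ denote the unique root of $g_p(\cdot \mid M)$ in $(\frac{1}{1-p}, \infty)$. Then $\alpha_{p,M} \to \frac{1}{1-p}$ as $M \to \infty$; more precisely, for every $s$ with $0 < s < \frac{1}{2}$ there exists $M_0$ such that for all $M \ge M_0$, $\frac{1}{1-p} < \alpha_{p,M} \le \frac{1}{1-p} + M^{-s}$. -/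

import Mathlib

/-!
Write `gM p M α = exp (log 2 / M + L α) - 1`, where `L` is the logarithm of
`α^α / (α-1)^(α-1) · p^(α-1) (1-p)`. `L` vanishes at `α₀ = 1/(1-p)` and its derivative
`log (p α / (α-1)) ≤ p α / (α-1) - 1` is at most `-(1-p)² (α - α₀)` on `[α₀, α₀ + 1]`, so
`L (α₀ + δ) ≤ -(1-p)² δ² / 2`. Hence `gM p M` changes sign on `[α₀, α₀ + δ]` as soon as
`log 2 / M < (1-p)² δ² / 2`, which holds for `δ = M^(-s)` and large `M` because `2 s < 1`;
uniqueness of the root places `α_{p,M}` in `(α₀, α₀ + M^(-s)]`.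
-/

/-- `g_p(α | M) = 2^{1/M} α^α / (α-1)^(α-1) · p^(α-1) (1-p) - 1`, with real powers. -/
noncomputable def gM (p : ℝ) (M : ℕ) (α : ℝ) : ℝ :=
  (2 : ℝ) ^ ((1 : ℝ) / M) * (α ^ α / (α - 1) ^ (α - 1)) * p ^ (α - 1) * (1 - p) - 1

open Real Filter Set

noncomputable def logFactor (p α : ℝ) : ℝ :=
  α * log α - (α - 1) * log (α - 1) + (α - 1) * log p + log (1 - p)

lemma hasDerivAt_logFactor (p : ℝ) {α : ℝ} (hα : 1 < α) :
    HasDerivAt (logFactor p) (log α - log (α - 1) + log p) α := by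
  have hshift : HasDerivAt (fun x ↦ (x - 1) * log (x - 1)) (log (α - 1) + 1) α := by
    simpa [Function.comp_def] using
      (hasDerivAt_mul_log (sub_ne_zero.mpr hα.ne')).comp α ((hasDerivAt_id α).sub_const 1)
  have hlin : HasDerivAt (fun x ↦ (x - 1) * log p) (log p) α := by
    simpa using ((hasDerivAt_id α).sub_const 1).mul_const (log p)
  exact ((((hasDerivAt_mul_log (by linarith : (0 : ℝ) < α).ne').sub hshift).add hlin).add_const
    (log (1 - p))).congr_deriv (by ring)

lemma gM_eq_exp_sub_one {p : ℝ} (hp : 0 < p) (hp1 : p < 1) (M : ℕ) {α : ℝ} (hα : 1 < α) :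
    gM p M α = exp (log 2 / M + logFactor p α) - 1 := by
  rw [gM, logFactor, rpow_def_of_pos (by linarith : (0 : ℝ) < α - 1), rpow_def_of_pos hp,
    rpow_def_of_pos (by linarith : (0 : ℝ) < α), rpow_def_of_pos two_pos]
  simp only [exp_add, exp_sub, exp_log (sub_pos.mpr hp1), mul_comm (log _) α,
    mul_comm (log _) (α - 1), div_eq_mul_one_div (log 2)]
  ring

lemma logFactor_one_div_one_sub {p : ℝ} (hp : 0 < p) (hp1 : p < 1) :
    logFactor p (1 / (1 - p)) = 0 := by
  have h1p : 0 < 1 - p := sub_pos.mpr hp1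
  have hsub : 1 / (1 - p) - 1 = p * (1 / (1 - p)) := by field_simp; ring
  rw [logFactor, hsub, log_mul hp.ne' (by positivity), one_div, log_inv]
  field_simp
  ring

lemma log_sub_log_sub_one_add_log_le {p : ℝ} (hp : 0 < p) (hp1 : p < 1) {α : ℝ}
    (hα : 1 / (1 - p) ≤ α) (hα' : α ≤ 1 / (1 - p) + 1) :
    log α - log (α - 1) + log p ≤ -(1 - p) ^ 2 * (α - 1 / (1 - p)) := by
  have h1p : 0 < 1 - p := sub_pos.mpr hp1
  have hp1' : 1 - p < 1 := by linarith
  have hα₀ : (1 - p) * (1 / (1 - p)) = 1 := by field_simp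
  have hα1 : 0 < α - 1 := by linarith [one_lt_one_div h1p hp1']
  have hα0 : 0 < α := by linarith
  calc log α - log (α - 1) + log p = log (p * α / (α - 1)) := by
        rw [log_div (mul_pos hp hα0).ne' hα1.ne', log_mul hp.ne' hα0.ne']; ring
    _ ≤ p * α / (α - 1) - 1 := log_le_sub_one_of_pos (div_pos (mul_pos hp hα0) hα1)
    _ ≤ -(1 - p) ^ 2 * (α - 1 / (1 - p)) := by
        rw [div_sub_one hα1.ne', div_le_iff₀ hα1]
        linear_combination mul_nonneg (mul_nonneg (sq_nonneg (1 - p)) (sub_nonneg.mpr hα))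
          (sub_nonneg.mpr hα') - (1 - (1 - p) * (α - 1 / (1 - p))) * hα₀

lemma logFactor_le_neg_sq {p : ℝ} (hp : 0 < p) (hp1 : p < 1) {δ : ℝ} (hδ : 0 ≤ δ)
    (hδ1 : δ ≤ 1) : logFactor p (1 / (1 - p) + δ) ≤ -((1 - p) ^ 2 / 2) * δ ^ 2 := by
  set α₀ := 1 / (1 - p)
  have hα₀ : 1 < α₀ := one_lt_one_div (sub_pos.mpr hp1) (by linarith)
  have hderiv : ∀ x ∈ Icc α₀ (α₀ + 1), HasDerivAt (logFactor p) (log x - log (x - 1) + log p) x :=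
    fun x hx ↦ hasDerivAt_logFactor p (hα₀.trans_le hx.1)
  have hbound : ∀ x, HasDerivAt (fun x ↦ -((1 - p) ^ 2 / 2) * (x - α₀) ^ 2)
      (-(1 - p) ^ 2 * (x - α₀)) x := fun x ↦
    ((((hasDerivAt_id' x).sub_const α₀).fun_pow 2).const_mul _).congr_deriv (by push_cast; ring)
  have hle := image_le_of_deriv_right_le_deriv_boundary
    (fun x hx ↦ (hderiv x hx).continuousAt.continuousWithinAt)
    (fun x hx ↦ (hderiv x (Ico_subset_Icc_self hx)).hasDerivWithinAt)
    ((logFactor_one_div_one_sub hp hp1).le.trans (by simp))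
    (fun x _ ↦ (hbound x).continuousAt.continuousWithinAt)
    (fun x _ ↦ (hbound x).hasDerivWithinAt)
    (fun x hx ↦ log_sub_log_sub_one_add_log_le hp hp1 hx.1 hx.2.le)
    (⟨by linarith, by linarith⟩ : α₀ + δ ∈ Icc α₀ (α₀ + 1))
  simpa using hle

lemma exists_gM_eq_zero_of_log_two_div_lt {p : ℝ} (hp : 0 < p) (hp1 : p < 1) {M : ℕ}
    (hM : 0 < M) {δ : ℝ} (hδ : 0 ≤ δ) (hδ1 : δ ≤ 1)
    (hsmall : log 2 / M < (1 - p) ^ 2 / 2 * δ ^ 2) :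
    ∃ x ∈ Ioc (1 / (1 - p)) (1 / (1 - p) + δ), gM p M x = 0 := by
  set α₀ := 1 / (1 - p)
  have hα₀ : 1 < α₀ := one_lt_one_div (sub_pos.mpr hp1) (by linarith)
  have hcont : ContinuousOn (gM p M) (Icc α₀ (α₀ + δ)) := by
    refine ContinuousOn.congr (f := fun α ↦ exp (log 2 / M + logFactor p α) - 1) ?_
      fun x hx ↦ gM_eq_exp_sub_one hp hp1 M (hα₀.trans_le hx.1)
    exact fun x hx ↦ (((hasDerivAt_logFactor p (hα₀.trans_le hx.1)).continuousAt.const_add _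
      ).rexp.sub continuousAt_const).continuousWithinAt
  have hleft : 0 < gM p M α₀ := by
    rw [gM_eq_exp_sub_one hp hp1 M hα₀, logFactor_one_div_one_sub hp hp1, sub_pos,
      one_lt_exp_iff]
    positivity
  have hright : gM p M (α₀ + δ) < 0 := by
    rw [gM_eq_exp_sub_one hp hp1 M (by linarith), sub_neg, exp_lt_one_iff]
    linarith [logFactor_le_neg_sq hp hp1 hδ hδ1]
  obtain ⟨x, hx, hx0⟩ := intermediate_value_Icc' (by linarith) hcont ⟨hright.le, hleft.le⟩
  exact ⟨x, ⟨hx.1.lt_of_ne (by rintro rfl; linarith), hx.2⟩, hx0⟩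

lemma eventually_div_lt_mul_rpow_neg_sq (a : ℝ) {c s : ℝ} (hc : 0 < c) (hs : s < 1 / 2) :
    ∀ᶠ M : ℕ in atTop, a / M < c * ((M : ℝ) ^ (-s)) ^ 2 := by
  have htend : Tendsto (fun M : ℕ ↦ (M : ℝ) ^ (1 - 2 * s)) atTop atTop :=
    (tendsto_rpow_atTop (by linarith)).comp tendsto_natCast_atTop_atTop
  filter_upwards [htend.eventually_gt_atTop (a / c), eventually_gt_atTop 0] with M hlt hM
  have hM' : (0 : ℝ) < M := Nat.cast_pos.mpr hM
  have hpow : (M : ℝ) ^ (1 - 2 * s) = M * ((M : ℝ) ^ (-s)) ^ 2 := by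
    rw [← rpow_natCast, ← rpow_mul hM'.le,
      show 1 - 2 * s = 1 + -s * (2 : ℕ) by push_cast; ring, rpow_add hM', rpow_one]
  rw [div_lt_iff₀ hM']
  rw [div_lt_iff₀ hc, hpow] at hlt
  linarith

theorem claim_root_limit_general (p : ℝ) (hp : 0 < p) (hp1 : p < 1) (A : ℕ → ℝ)
    (huniq : ∀ M : ℕ, 1 ≤ M → ∀ β : ℝ, 1 / (1 - p) < β → gM p M β = 0 → β = A M) :
    Filter.Tendsto A Filter.atTop (nhds (1 / (1 - p))) ∧
    ∀ s : ℝ, 0 < s → s < 1 / 2 →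
      ∃ M₀ : ℕ, ∀ M : ℕ, M₀ ≤ M →
        1 / (1 - p) < A M ∧ A M ≤ 1 / (1 - p) + (M : ℝ) ^ (-s) := by
  have bound : ∀ s : ℝ, 0 < s → s < 1 / 2 → ∀ᶠ M : ℕ in atTop,
      1 / (1 - p) < A M ∧ A M ≤ 1 / (1 - p) + (M : ℝ) ^ (-s) := fun s hs hs2 ↦ by
    filter_upwards [eventually_div_lt_mul_rpow_neg_sq (log 2) (c := (1 - p) ^ 2 / 2)
      (by nlinarith) hs2, eventually_gt_atTop 0] with M hsmall hM
    obtain ⟨x, hx, hx0⟩ := exists_gM_eq_zero_of_log_two_div_lt hp hp1 hM (by positivity)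
      (rpow_le_one_of_one_le_of_nonpos (by exact_mod_cast hM) (by linarith)) hsmall
    rw [← huniq M hM x hx.1 hx0]
    exact hx
  refine ⟨?_, fun s hs hs2 ↦ eventually_atTop.mp (bound s hs hs2)⟩
  have hupper : Tendsto (fun M : ℕ ↦ 1 / (1 - p) + (M : ℝ) ^ (-(1 / 4 : ℝ))) atTop
      (nhds (1 / (1 - p))) := by
    simpa using tendsto_const_nhds.add
      ((tendsto_rpow_neg_atTop (by norm_num)).comp tendsto_natCast_atTop_atTop)
  exact tendsto_of_tendsto_of_tendsto_of_le_of_le' tendsto_const_nhds hupper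
    ((bound (1 / 4) (by norm_num) (by norm_num)).mono fun _ h ↦ h.1.le)
    ((bound (1 / 4) (by norm_num) (by norm_num)).mono fun _ h ↦ h.2)

/-- If `A M` denotes the unique root of `g_p(· | M)` in `(1/(1-p), ∞)`, then
`A M → 1/(1-p)`, and for every `0 < s < 1/2` eventually
`1/(1-p) < A M ≤ 1/(1-p) + M^{-s}`. -/
theorem claim_root_limit (p : ℝ) (hp : 0 < p) (hp1 : p < 1) (A : ℕ → ℝ)
    (hroot : ∀ M : ℕ, 1 ≤ M → 1 / (1 - p) < A M ∧ gM p M (A M) = 0)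
    (huniq : ∀ M : ℕ, 1 ≤ M → ∀ β : ℝ, 1 / (1 - p) < β → gM p M β = 0 → β = A M) :
    Filter.Tendsto A Filter.atTop (nhds (1 / (1 - p))) ∧
    ∀ s : ℝ, 0 < s → s < 1 / 2 →
      ∃ M₀ : ℕ, ∀ M : ℕ, M₀ ≤ M →
        1 / (1 - p) < A M ∧ A M ≤ 1 / (1 - p) + (M : ℝ) ^ (-s) :=
  claim_root_limit_general p hp hp1 A huniq
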